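/- Consider the system of ODEs on the upper half space {(x,z) : x > 0, z ∈ ℂ} for φ = (φ₁,φ₂,φ₃,φ₄): ∂φ₁/∂x = -(3/(2x))φ₁, ∂φ₁/∂z = (3i/x)φ₂; ∂φ₂/∂x = -(1/(2x))φ₂, ∂φ₂/∂z = (4i/x)φ₃; ∂φ₃/∂x = (1/(2x))φ₃, ∂φ₃/∂z = (3i/x)φ₄; ∂φ₄/∂x = (3/(2x))φ₄, ∂φ₄/∂z = 0, with all φᵢ holomorphic in z (∂φᵢ/∂z̄ = 0). Then the solution space is exactly 4-dimensional, spanned by (x^{-3/2},0,0,0), (3izx^{-3/2}, x^{-1/2}, 0, 0), (-6z²x^{-3/2}, 4izx^{-1/2}, x^{1/2}, 0), (-6iz³x^{-3/2}, -6z²x^{-1/2}, 3izx^{1/2}, x^{3/2}). -/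

import Mathlib

/-!
The system is triangular: `φ₄` is constant in `z`, and each `∂φᵢ/∂z` is prescribed by
`φᵢ₊₁`. Every component therefore separates as (polynomial in `z`) · `x ^ r`: the radial
equation `∂ₓf = (r/x) f` forces `f x = f 1 · x ^ r` because `f · x ^ (-r)` has zero derivative
on `(0, ∞)`, and in `z` two entire functions with the same derivative that agree at `0`
coincide. Solving from `φ₄` up to `φ₁` produces one free constant per component, namely its
value at `(1, 0)`.
-/

open Complex

theorem ofReal_rpow_div_self {x : ℝ} (hx : 0 < x) (s : ℝ) :
    ((x ^ s : ℝ) : ℂ) / x = ((x ^ (s - 1) : ℝ) : ℂ) := by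
  rw [Real.rpow_sub_one hx.ne', ofReal_div]

theorem div_mul_ofReal_rpow {x r s : ℝ} (hx : 0 < x) (hrs : r + 1 = s) (a p : ℂ) :
    a / x * (p * ((x ^ s : ℝ) : ℂ)) = a * p * ((x ^ r : ℝ) : ℂ) := by
  rw [← hrs, ← add_sub_cancel_right r 1, ← ofReal_rpow_div_self hx, add_sub_cancel_right]
  ring

theorem hasDerivAt_ofReal_rpow {x : ℝ} (hx : 0 < x) (r : ℝ) :
    HasDerivAt (fun t : ℝ => ((t ^ r : ℝ) : ℂ)) (r / x * ((x ^ r : ℝ) : ℂ)) x := by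
  convert (Real.hasDerivAt_rpow_const (p := r) (Or.inl hx.ne')).ofReal_comp using 1
  rw [ofReal_mul, ← ofReal_rpow_div_self hx]
  ring

theorem eq_mul_rpow_of_hasDerivAt {f : ℝ → ℂ} {r : ℝ}
    (hf : ∀ t : ℝ, 0 < t → HasDerivAt f (r / t * f t) t) {x : ℝ} (hx : 0 < x) :
    f x = f 1 * ((x ^ r : ℝ) : ℂ) := by
  have hderiv : ∀ t : ℝ, 0 < t →
      HasDerivAt (fun s : ℝ => f s * ((s ^ (-r) : ℝ) : ℂ)) 0 t := fun t ht => by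
    refine ((hf t ht).mul (hasDerivAt_ofReal_rpow ht (-r))).congr_deriv ?_
    push_cast
    ring
  have hconst : f x * ((x ^ (-r) : ℝ) : ℂ) = f 1 * ((1 ^ (-r) : ℝ) : ℂ) :=
    isOpen_Ioi.is_const_of_deriv_eq_zero isPreconnected_Ioi
      (fun t ht => (hderiv t ht).differentiableAt.differentiableWithinAt)
      (fun t ht => (hderiv t ht).deriv) hx (Set.mem_Ioi.2 one_pos)
  have hinv : ((x ^ (-r) : ℝ) : ℂ) * ((x ^ r : ℝ) : ℂ) = 1 := by
    rw [← ofReal_mul, ← Real.rpow_add hx, neg_add_cancel, Real.rpow_zero, ofReal_one]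
  rw [Real.one_rpow, ofReal_one, mul_one] at hconst
  rw [← hconst, mul_assoc, hinv, mul_one]

theorem radial_holomorphic_system_iff {f δ : ℝ → ℂ → ℂ} {κ : ℝ → ℂ} {r : ℝ} {q : ℂ → ℂ}
    (F : ℂ → ℂ → ℂ) (hκ : ∀ x : ℝ, κ x = r / x)
    (hF : ∀ c w, HasDerivAt (F c) (q w) w) (hF₀ : ∀ c, F c 0 = c)
    (hδ : ∀ x : ℝ, 0 < x → ∀ z, δ x z = q z * ((x ^ r : ℝ) : ℂ)) :
    (∀ x : ℝ, 0 < x → ∀ z : ℂ, HasDerivAt (fun t : ℝ => f t z) (κ x * f x z) x ∧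
        HasDerivAt (fun w : ℂ => f x w) (δ x z) z) ↔
      ∃ c : ℂ, ∀ x : ℝ, 0 < x → ∀ z : ℂ, f x z = F c z * ((x ^ r : ℝ) : ℂ) := by
  constructor
  · intro h
    refine ⟨f 1 0, fun x hx z => ?_⟩
    have hx₀ : f x 0 = f 1 0 * ((x ^ r : ℝ) : ℂ) :=
      eq_mul_rpow_of_hasDerivAt (f := (f · 0)) (fun t ht => hκ t ▸ (h t ht 0).1) hx
    have hfz (w : ℂ) : HasDerivAt (f x ·) (q w * ((x ^ r : ℝ) : ℂ)) w :=
      hδ x hx w ▸ (h x hx w).2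
    have hFz (w : ℂ) : HasDerivAt (F (f 1 0) · * ((x ^ r : ℝ) : ℂ)) (q w * ((x ^ r : ℝ) : ℂ)) w :=
      (hF _ w).mul_const _
    refine isOpen_univ.eqOn_of_deriv_eq isPreconnected_univ
      (fun w _ => (hfz w).differentiableAt.differentiableWithinAt)
      (fun w _ => (hFz w).differentiableAt.differentiableWithinAt)
      (fun w _ => (hfz w).deriv.trans (hFz w).deriv.symm) (Set.mem_univ 0) ?_ (Set.mem_univ z)
    rw [hx₀, hF₀]
  · rintro ⟨c, hc⟩ x hx z
    have hfx : (f x ·) = (F c · * ((x ^ r : ℝ) : ℂ)) := funext (hc x hx)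
    have hft : (f · z) =ᶠ[nhds x] (fun t : ℝ => F c z * ((t ^ r : ℝ) : ℂ)) :=
      Filter.eventually_of_mem (isOpen_Ioi.mem_nhds hx) fun t ht => hc t ht z
    constructor
    · refine (((hasDerivAt_ofReal_rpow hx r).const_mul (F c z)).congr_of_eventuallyEq
        hft).congr_deriv ?_
      rw [hκ, hc x hx z]
      ring
    · rw [hfx, hδ x hx z]
      exact (hF c z).mul_const _

theorem killing_fourth_component_iff {φ₄ : ℝ → ℂ → ℂ} :
    (∀ x : ℝ, 0 < x → ∀ z : ℂ,
        HasDerivAt (fun t : ℝ => φ₄ t z) ((3 / (2 * (x : ℂ))) * φ₄ x z) x ∧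
        HasDerivAt (fun w : ℂ => φ₄ x w) 0 z) ↔
      ∃ C₄ : ℂ, ∀ x : ℝ, 0 < x → ∀ z : ℂ, φ₄ x z = C₄ * ((x ^ ((3 / 2 : ℝ)) : ℝ) : ℂ) :=
  radial_holomorphic_system_iff (r := 3 / 2) (q := fun _ => 0) (fun c _ => c)
    (fun x => by push_cast; ring) (fun c w => hasDerivAt_const w c) (fun _ => rfl)
    fun _ _ _ => (zero_mul _).symm

theorem killing_third_component_iff {φ₃ φ₄ : ℝ → ℂ → ℂ} {C₄ : ℂ}
    (h₄ : ∀ x : ℝ, 0 < x → ∀ z : ℂ, φ₄ x z = C₄ * ((x ^ ((3 / 2 : ℝ)) : ℝ) : ℂ)) :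
    (∀ x : ℝ, 0 < x → ∀ z : ℂ,
        HasDerivAt (fun t : ℝ => φ₃ t z) ((1 / (2 * (x : ℂ))) * φ₃ x z) x ∧
        HasDerivAt (fun w : ℂ => φ₃ x w) (3 * I / (x : ℂ) * φ₄ x z) z) ↔
      ∃ C₃ : ℂ, ∀ x : ℝ, 0 < x → ∀ z : ℂ,
        φ₃ x z = (C₃ + 3 * I * C₄ * z) * ((x ^ ((1 / 2 : ℝ)) : ℝ) : ℂ) :=
  radial_holomorphic_system_iff (r := 1 / 2) (q := fun _ => 3 * I * C₄)
    (fun c z => c + 3 * I * C₄ * z) (fun x => by push_cast; ring)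
    (fun c w => (((hasDerivAt_id w).const_mul (3 * I * C₄)).const_add c).congr_deriv (mul_one _))
    (fun c => by simp)
    (fun x hx z => by rw [h₄ x hx z]; exact div_mul_ofReal_rpow hx (by norm_num) _ _)

theorem killing_second_component_iff {φ₂ φ₃ : ℝ → ℂ → ℂ} {C₃ C₄ : ℂ}
    (h₃ : ∀ x : ℝ, 0 < x → ∀ z : ℂ,
      φ₃ x z = (C₃ + 3 * I * C₄ * z) * ((x ^ ((1 / 2 : ℝ)) : ℝ) : ℂ)) :
    (∀ x : ℝ, 0 < x → ∀ z : ℂ,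
        HasDerivAt (fun t : ℝ => φ₂ t z) (-(1 / (2 * (x : ℂ))) * φ₂ x z) x ∧
        HasDerivAt (fun w : ℂ => φ₂ x w) (4 * I / (x : ℂ) * φ₃ x z) z) ↔
      ∃ C₂ : ℂ, ∀ x : ℝ, 0 < x → ∀ z : ℂ,
        φ₂ x z = (C₂ + 4 * I * C₃ * z - 6 * C₄ * z ^ 2) * ((x ^ (-(1 / 2 : ℝ)) : ℝ) : ℂ) :=
  radial_holomorphic_system_iff (r := -(1 / 2)) (q := fun z => 4 * I * (C₃ + 3 * I * C₄ * z))
    (fun c z => c + 4 * I * C₃ * z - 6 * C₄ * z ^ 2) (fun x => by push_cast; ring)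
    (fun c w => ((((hasDerivAt_id w).const_mul (4 * I * C₃)).const_add c).sub
      ((hasDerivAt_pow 2 w).const_mul (6 * C₄))).congr_deriv (by
        linear_combination (-12 * C₄ * w) * I_sq))
    (fun c => by simp)
    (fun x hx z => by rw [h₃ x hx z]; exact div_mul_ofReal_rpow hx (by norm_num) _ _)

theorem killing_first_component_iff {φ₁ φ₂ : ℝ → ℂ → ℂ} {C₂ C₃ C₄ : ℂ}
    (h₂ : ∀ x : ℝ, 0 < x → ∀ z : ℂ,
      φ₂ x z = (C₂ + 4 * I * C₃ * z - 6 * C₄ * z ^ 2) * ((x ^ (-(1 / 2 : ℝ)) : ℝ) : ℂ)) :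
    (∀ x : ℝ, 0 < x → ∀ z : ℂ,
        HasDerivAt (fun t : ℝ => φ₁ t z) (-(3 / (2 * (x : ℂ))) * φ₁ x z) x ∧
        HasDerivAt (fun w : ℂ => φ₁ x w) (3 * I / (x : ℂ) * φ₂ x z) z) ↔
      ∃ C₁ : ℂ, ∀ x : ℝ, 0 < x → ∀ z : ℂ,
        φ₁ x z = (C₁ + 3 * I * C₂ * z - 6 * C₃ * z ^ 2 - 6 * I * C₄ * z ^ 3)
          * ((x ^ (-(3 / 2 : ℝ)) : ℝ) : ℂ) :=
  radial_holomorphic_system_iff (r := -(3 / 2))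
    (q := fun z => 3 * I * (C₂ + 4 * I * C₃ * z - 6 * C₄ * z ^ 2))
    (fun c z => c + 3 * I * C₂ * z - 6 * C₃ * z ^ 2 - 6 * I * C₄ * z ^ 3)
    (fun x => by push_cast; ring)
    (fun c w => (((((hasDerivAt_id w).const_mul (3 * I * C₂)).const_add c).sub
      ((hasDerivAt_pow 2 w).const_mul (6 * C₃))).sub
      ((hasDerivAt_pow 3 w).const_mul (6 * I * C₄))).congr_deriv (by
        linear_combination (-12 * C₃ * w) * I_sq))
    (fun c => by simp)
    (fun x hx z => by rw [h₂ x hx z]; exact div_mul_ofReal_rpow hx (by norm_num) _ _)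

theorem spin_three_halves_killing_on_H3 (φ₁ φ₂ φ₃ φ₄ : ℝ → ℂ → ℂ) :
    ((∀ x : ℝ, 0 < x → ∀ z : ℂ,
        HasDerivAt (fun t : ℝ => φ₁ t z) (-(3 / (2 * (x : ℂ))) * φ₁ x z) x ∧
        HasDerivAt (fun w : ℂ => φ₁ x w) (3 * I / (x : ℂ) * φ₂ x z) z ∧
        HasDerivAt (fun t : ℝ => φ₂ t z) (-(1 / (2 * (x : ℂ))) * φ₂ x z) x ∧
        HasDerivAt (fun w : ℂ => φ₂ x w) (4 * I / (x : ℂ) * φ₃ x z) z ∧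
        HasDerivAt (fun t : ℝ => φ₃ t z) ((1 / (2 * (x : ℂ))) * φ₃ x z) x ∧
        HasDerivAt (fun w : ℂ => φ₃ x w) (3 * I / (x : ℂ) * φ₄ x z) z ∧
        HasDerivAt (fun t : ℝ => φ₄ t z) ((3 / (2 * (x : ℂ))) * φ₄ x z) x ∧
        HasDerivAt (fun w : ℂ => φ₄ x w) 0 z))
    ↔ (∃ C₁ C₂ C₃ C₄ : ℂ, ∀ x : ℝ, 0 < x → ∀ z : ℂ,
        φ₁ x z = (C₁ + 3 * I * C₂ * z - 6 * C₃ * z ^ 2 - 6 * I * C₄ * z ^ 3)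
          * ((x ^ (-(3 / 2 : ℝ)) : ℝ) : ℂ) ∧
        φ₂ x z = (C₂ + 4 * I * C₃ * z - 6 * C₄ * z ^ 2)
          * ((x ^ (-(1 / 2 : ℝ)) : ℝ) : ℂ) ∧
        φ₃ x z = (C₃ + 3 * I * C₄ * z) * ((x ^ ((1 / 2 : ℝ)) : ℝ) : ℂ) ∧
        φ₄ x z = C₄ * ((x ^ ((3 / 2 : ℝ)) : ℝ) : ℂ)) := by
  constructor
  · intro h
    obtain ⟨C₄, h₄⟩ := killing_fourth_component_iff.1 fun x hx z =>
      ⟨(h x hx z).2.2.2.2.2.2.1, (h x hx z).2.2.2.2.2.2.2⟩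
    obtain ⟨C₃, h₃⟩ := (killing_third_component_iff h₄).1 fun x hx z =>
      ⟨(h x hx z).2.2.2.2.1, (h x hx z).2.2.2.2.2.1⟩
    obtain ⟨C₂, h₂⟩ := (killing_second_component_iff h₃).1 fun x hx z =>
      ⟨(h x hx z).2.2.1, (h x hx z).2.2.2.1⟩
    obtain ⟨C₁, h₁⟩ := (killing_first_component_iff h₂).1 fun x hx z =>
      ⟨(h x hx z).1, (h x hx z).2.1⟩
    exact ⟨C₁, C₂, C₃, C₄, fun x hx z => ⟨h₁ x hx z, h₂ x hx z, h₃ x hx z, h₄ x hx z⟩⟩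
  · rintro ⟨C₁, C₂, C₃, C₄, h⟩ x hx z
    have h₂ x hx z := (h x hx z).2.1
    have h₃ x hx z := (h x hx z).2.2.1
    have h₄ x hx z := (h x hx z).2.2.2
    obtain ⟨d₁t, d₁z⟩ := (killing_first_component_iff h₂).2 ⟨C₁, fun x hx z => (h x hx z).1⟩ x hx z
    obtain ⟨d₂t, d₂z⟩ := (killing_second_component_iff h₃).2 ⟨C₂, h₂⟩ x hx z
    obtain ⟨d₃t, d₃z⟩ := (killing_third_component_iff h₄).2 ⟨C₃, h₃⟩ x hx z
    obtain ⟨d₄t, d₄z⟩ := killing_fourth_component_iff.2 ⟨C₄, h₄⟩ x hx z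
    exact ⟨d₁t, d₁z, d₂t, d₂z, d₃t, d₃z, d₄t, d₄z⟩
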